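/- The set of positive roots R⁺ = R ∩ Σ_{i∈I} ℕ·α_i has exactly 120 elements, and R is the disjoint union of R⁺ and −R⁺. -/

import Mathlib

/-
The bilinear form of E8 is positive definite and even, so a root `x = p - q`, split into its
positive and negative parts, would give `2 = (p, p) + (q, q) - 2 (p, q) ≥ 4` since `(p, q) ≤ 0`;
hence every root is positive or negative. A positive root `α` has `(α, αᵢ) > 0` for some `i`,
and the simple reflection `sᵢ` then either lowers its height or shows `α = αᵢ`. So the positive
roots are exactly the closure of the simple roots under those simple reflections that stay
positive, and it suffices to exhibit an explicit list of 120 positive roots containing the simple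
roots and closed under this operation.
-/

open Matrix BigOperators

/-- The E8 Cartan matrix (vertices 0..7; path 0-2-3-4-5-6-7 with 1 attached to 3,
matching Bourbaki labeling shifted by one). -/
def E8C : Matrix (Fin 8) (Fin 8) ℤ :=
  !![ 2,  0, -1,  0,  0,  0,  0,  0;
      0,  2,  0, -1,  0,  0,  0,  0;
     -1,  0,  2, -1,  0,  0,  0,  0;
      0, -1, -1,  2, -1,  0,  0,  0;
      0,  0,  0, -1,  2, -1,  0,  0;
      0,  0,  0,  0, -1,  2, -1,  0;
      0,  0,  0,  0,  0, -1,  2, -1;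
      0,  0,  0,  0,  0,  0, -1,  2]

/-- The E8 bilinear form on V = ℤ^8. -/
def B (x y : Fin 8 → ℤ) : ℤ := ∑ i, ∑ j, x i * E8C i j * y j

/-- The set of roots. -/
def E8R : Set (Fin 8 → ℤ) := {α | B α α = 2}

/-- The set of positive roots. -/
def E8Rpos : Set (Fin 8 → ℤ) := {α | α ∈ E8R ∧ ∀ i, 0 ≤ α i}

/-- The simple roots (standard basis vectors). -/
def sr (i : Fin 8) : Fin 8 → ℤ := fun j => if j = i then 1 else 0

section SimplyLaced

variable {ι : Type*} [Fintype ι] {A : Matrix ι ι ℤ}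

theorem dotProduct_mulVec_sub_sub (x y : ι → ℤ) :
    (x - y) ⬝ᵥ A *ᵥ (x - y) = x ⬝ᵥ A *ᵥ x + y ⬝ᵥ A *ᵥ y - x ⬝ᵥ A *ᵥ y - y ⬝ᵥ A *ᵥ x := by
  simp only [mulVec_sub, dotProduct_sub, sub_dotProduct]
  ring

theorem exists_vecMul_pos_of_root {x : ι → ℤ} (hpos : 0 ≤ x) (hx : x ⬝ᵥ A *ᵥ x = 2) :
    ∃ i, 0 < (x ᵥ* A) i := by
  by_contra! h
  have : (x ᵥ* A) ⬝ᵥ x ≤ 0 :=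
    Finset.sum_nonpos fun i _ => mul_nonpos_of_nonpos_of_nonneg (h i) (hpos i)
  rw [← dotProduct_mulVec, hx] at this
  omega

theorem dotProduct_mulVec_nonpos_of_disjoint (hoff : ∀ i j, i ≠ j → A i j ≤ 0)
    {p q : ι → ℤ} (hp : 0 ≤ p) (hq : 0 ≤ q) (hpq : ∀ i, p i * q i = 0) :
    p ⬝ᵥ A *ᵥ q ≤ 0 := by
  simp only [dotProduct, mulVec, Finset.mul_sum]
  refine Finset.sum_nonpos fun i _ => Finset.sum_nonpos fun j _ => ?_
  rw [mul_left_comm]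
  obtain rfl | hij := eq_or_ne i j
  · rw [hpq, mul_zero]
  · exact mul_nonpos_of_nonpos_of_nonneg (hoff i j hij) (mul_nonneg (hp i) (hq j))

theorem nonneg_or_nonpos_of_root (hoff : ∀ i j, i ≠ j → A i j ≤ 0)
    (hmin : ∀ x : ι → ℤ, x ≠ 0 → 2 ≤ x ⬝ᵥ A *ᵥ x) {x : ι → ℤ} (hx : x ⬝ᵥ A *ᵥ x = 2) :
    0 ≤ x ∨ x ≤ 0 := by
  by_contra! h
  have hdisj : ∀ i, x⁺ i * x⁻ i = 0 := fun i => by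
    rw [Pi.posPart_apply, Pi.negPart_apply]
    rcases le_total (x i) 0 with hi | hi
    · rw [posPart_eq_zero.mpr hi, zero_mul]
    · rw [negPart_eq_zero.mpr hi, mul_zero]
  have hpq := dotProduct_mulVec_nonpos_of_disjoint hoff (posPart_nonneg x) (negPart_nonneg x) hdisj
  have hqp := dotProduct_mulVec_nonpos_of_disjoint hoff (negPart_nonneg x) (posPart_nonneg x)
    fun i => by rw [mul_comm, hdisj]
  have hp := hmin _ (mt posPart_eq_zero.mp h.2)
  have hq := hmin _ (mt negPart_eq_zero.mp h.1)
  have := dotProduct_mulVec_sub_sub (A := A) x⁺ x⁻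
  rw [posPart_sub_negPart, hx] at this
  linarith

variable [DecidableEq ι]

def simpleReflection (A : Matrix ι ι ℤ) (i : ι) (x : ι → ℤ) : ι → ℤ :=
  x - Pi.single i ((x ᵥ* A) i)

theorem single_dotProduct_mulVec_single (i : ι) (a : ℤ) :
    Pi.single i a ⬝ᵥ A *ᵥ Pi.single i a = a * a * A i i := by
  rw [dotProduct_mulVec, dotProduct_single, single_vecMul]
  simp only [Pi.smul_apply, smul_eq_mul, Matrix.row]
  ring

theorem simpleReflection_coeff (hdiag : ∀ i, A i i = 2) (i : ι) (x : ι → ℤ) :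
    (simpleReflection A i x ᵥ* A) i = -(x ᵥ* A) i := by
  simp only [simpleReflection, sub_vecMul, single_vecMul, Pi.sub_apply, Pi.smul_apply,
    smul_eq_mul, Matrix.row, hdiag]
  ring

theorem simpleReflection_simpleReflection (hdiag : ∀ i, A i i = 2) (i : ι) (x : ι → ℤ) :
    simpleReflection A i (simpleReflection A i x) = x := by
  rw [simpleReflection, simpleReflection_coeff hdiag, simpleReflection, Pi.single_neg,
    sub_neg_eq_add, sub_add_cancel]

theorem simpleReflection_dotProduct_mulVec (hsymm : A.IsSymm) (hdiag : ∀ i, A i i = 2) (i : ι)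
    (x : ι → ℤ) :
    simpleReflection A i x ⬝ᵥ A *ᵥ simpleReflection A i x = x ⬝ᵥ A *ᵥ x := by
  have hleft : x ⬝ᵥ A *ᵥ Pi.single i ((x ᵥ* A) i) = (x ᵥ* A) i * (x ᵥ* A) i := by
    rw [dotProduct_mulVec, dotProduct_single]
  have hright : Pi.single i ((x ᵥ* A) i) ⬝ᵥ A *ᵥ x = (x ᵥ* A) i * (x ᵥ* A) i := by
    rw [single_dotProduct, ← mulVec_transpose, hsymm.eq]
  rw [simpleReflection, dotProduct_mulVec_sub_sub, hleft, hright,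
    single_dotProduct_mulVec_single, hdiag]
  ring

theorem sum_simpleReflection (i : ι) (x : ι → ℤ) :
    ∑ j, simpleReflection A i x j = ∑ j, x j - (x ᵥ* A) i := by
  simp only [simpleReflection, Pi.sub_apply, Finset.sum_sub_distrib, Fintype.sum_pi_single']

theorem eq_single_of_simpleReflection_nonpos (hdiag : ∀ i, A i i = 2) {i : ι} {x : ι → ℤ}
    (hpos : 0 ≤ x) (hx : x ⬝ᵥ A *ᵥ x = 2) (hs : simpleReflection A i x ≤ 0) :
    x = Pi.single i 1 := by
  have hsingle : x = Pi.single i (x i) := by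
    ext j
    obtain rfl | hj := eq_or_ne j i
    · simp
    · have := hs j
      simp only [simpleReflection, Pi.sub_apply, Pi.single_eq_of_ne hj, sub_zero,
        Pi.zero_apply] at this
      simp [Pi.single_eq_of_ne hj, le_antisymm this (hpos j)]
  rw [hsingle, single_dotProduct_mulVec_single, hdiag] at hx
  have hone : x i = 1 := by
    have : 0 ≤ x i := hpos i
    rcases mul_self_eq_one_iff.mp (by linarith : x i * x i = 1) with h | h <;> omega
  rwa [hone] at hsingle

theorem mem_of_simpleReflection_closed (hsymm : A.IsSymm) (hdiag : ∀ i, A i i = 2)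
    (hoff : ∀ i j, i ≠ j → A i j ≤ 0) (hmin : ∀ x : ι → ℤ, x ≠ 0 → 2 ≤ x ⬝ᵥ A *ᵥ x)
    {S : Set (ι → ℤ)} (hsimple : ∀ i, Pi.single i 1 ∈ S)
    (hclosed : ∀ v ∈ S, ∀ i, 0 ≤ simpleReflection A i v → simpleReflection A i v ∈ S)
    {x : ι → ℤ} (hpos : 0 ≤ x) (hx : x ⬝ᵥ A *ᵥ x = 2) : x ∈ S := by
  induction hn : (∑ j, x j).toNat using Nat.strong_induction_on generalizing x with
  | _ n ih =>
  obtain ⟨i, hi⟩ := exists_vecMul_pos_of_root hpos hx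
  have hy := simpleReflection_dotProduct_mulVec hsymm hdiag i x
  rcases nonneg_or_nonpos_of_root hoff hmin (hy.trans hx) with hypos | hyneg
  · have hlt : (∑ j, simpleReflection A i x j).toNat < n := by
      have : 0 ≤ ∑ j, simpleReflection A i x j := Finset.sum_nonneg fun j _ => hypos j
      rw [sum_simpleReflection] at *
      omega
    have := hclosed _ (ih _ hlt hypos (hy.trans hx) rfl) i
    rw [simpleReflection_simpleReflection hdiag] at this
    exact this hpos
  · rw [eq_single_of_simpleReflection_nonpos hdiag hpos hx hyneg]
    exact hsimple i

end SimplyLaced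

theorem B_eq_dotProduct_mulVec (x y : Fin 8 → ℤ) : B x y = x ⬝ᵥ E8C *ᵥ y := by
  rw [B, ← Matrix.toBilin'_apply, Matrix.toBilin'_apply']

theorem E8C_isSymm : E8C.IsSymm := by decide

theorem E8C_diag : ∀ i, E8C i i = 2 := by decide

theorem E8C_offDiag_nonpos : ∀ i j, i ≠ j → E8C i j ≤ 0 := by
  intro i j
  fin_cases i <;> fin_cases j <;> decide

theorem E8C_quadForm (x : Fin 8 → ℤ) :
    x ⬝ᵥ E8C *ᵥ x = 2 * (x 0 ^ 2 + x 1 ^ 2 + x 2 ^ 2 + x 3 ^ 2 + x 4 ^ 2 + x 5 ^ 2 + x 6 ^ 2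
      + x 7 ^ 2 - x 0 * x 2 - x 1 * x 3 - x 2 * x 3 - x 3 * x 4 - x 4 * x 5 - x 5 * x 6
      - x 6 * x 7) := by
  simp [dotProduct, mulVec, Fin.sum_univ_eight, E8C]
  ring

-- Completing squares in the order `x 0, x 1, …, x 7`, i.e. an LDLᵀ decomposition of `E8C`.
theorem E8C_quadForm_sos (x : Fin 8 → ℤ) :
    60 * (x ⬝ᵥ E8C *ᵥ x) = 30 * (2 * x 0 - x 2) ^ 2 + 30 * (2 * x 1 - x 3) ^ 2
      + 10 * (3 * x 2 - 2 * x 3) ^ 2 + 2 * (5 * x 3 - 6 * x 4) ^ 2 + 3 * (4 * x 4 - 5 * x 5) ^ 2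
      + 5 * (3 * x 5 - 4 * x 6) ^ 2 + 10 * (2 * x 6 - 3 * x 7) ^ 2 + 30 * x 7 ^ 2 := by
  rw [E8C_quadForm]
  ring

theorem even_E8C_quadForm (x : Fin 8 → ℤ) : Even (x ⬝ᵥ E8C *ᵥ x) :=
  ⟨_, (E8C_quadForm x).trans (two_mul _)⟩

theorem two_le_E8C_quadForm {x : Fin 8 → ℤ} (hx : x ≠ 0) : 2 ≤ x ⬝ᵥ E8C *ᵥ x := by
  have hsos := E8C_quadForm_sos x
  have hnonneg : 0 ≤ x ⬝ᵥ E8C *ᵥ x := by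
    have : 0 ≤ 60 * (x ⬝ᵥ E8C *ᵥ x) := by rw [hsos]; positivity
    omega
  obtain ⟨k, hk⟩ := even_E8C_quadForm x
  by_contra! h
  have hzero : x ⬝ᵥ E8C *ᵥ x = 0 := by omega
  rw [hzero] at hsos
  have hsq : (2 * x 0 - x 2) ^ 2 = 0 ∧ (2 * x 1 - x 3) ^ 2 = 0 ∧ (3 * x 2 - 2 * x 3) ^ 2 = 0 ∧
      (5 * x 3 - 6 * x 4) ^ 2 = 0 ∧ (4 * x 4 - 5 * x 5) ^ 2 = 0 ∧ (3 * x 5 - 4 * x 6) ^ 2 = 0 ∧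
      (2 * x 6 - 3 * x 7) ^ 2 = 0 ∧ x 7 ^ 2 = 0 := by
    refine ⟨?_, ?_, ?_, ?_, ?_, ?_, ?_, ?_⟩ <;>
      linarith [sq_nonneg (2 * x 0 - x 2), sq_nonneg (2 * x 1 - x 3), sq_nonneg (3 * x 2 - 2 * x 3),
        sq_nonneg (5 * x 3 - 6 * x 4), sq_nonneg (4 * x 4 - 5 * x 5), sq_nonneg (3 * x 5 - 4 * x 6),
        sq_nonneg (2 * x 6 - 3 * x 7), sq_nonneg (x 7)]
  simp only [pow_eq_zero_iff two_ne_zero] at hsq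
  exact hx (funext fun j => by fin_cases j <;> simp <;> omega)

def e8PositiveRootList : List (Fin 8 → ℤ) := [
  ![0, 0, 0, 0, 0, 0, 0, 1],
  ![0, 0, 0, 0, 0, 0, 1, 0],
  ![0, 0, 0, 0, 0, 0, 1, 1],
  ![0, 0, 0, 0, 0, 1, 0, 0],
  ![0, 0, 0, 0, 0, 1, 1, 0],
  ![0, 0, 0, 0, 0, 1, 1, 1],
  ![0, 0, 0, 0, 1, 0, 0, 0],
  ![0, 0, 0, 0, 1, 1, 0, 0],
  ![0, 0, 0, 0, 1, 1, 1, 0],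
  ![0, 0, 0, 0, 1, 1, 1, 1],
  ![0, 0, 0, 1, 0, 0, 0, 0],
  ![0, 0, 0, 1, 1, 0, 0, 0],
  ![0, 0, 0, 1, 1, 1, 0, 0],
  ![0, 0, 0, 1, 1, 1, 1, 0],
  ![0, 0, 0, 1, 1, 1, 1, 1],
  ![0, 0, 1, 0, 0, 0, 0, 0],
  ![0, 0, 1, 1, 0, 0, 0, 0],
  ![0, 0, 1, 1, 1, 0, 0, 0],
  ![0, 0, 1, 1, 1, 1, 0, 0],
  ![0, 0, 1, 1, 1, 1, 1, 0],
  ![0, 0, 1, 1, 1, 1, 1, 1],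
  ![0, 1, 0, 0, 0, 0, 0, 0],
  ![0, 1, 0, 1, 0, 0, 0, 0],
  ![0, 1, 0, 1, 1, 0, 0, 0],
  ![0, 1, 0, 1, 1, 1, 0, 0],
  ![0, 1, 0, 1, 1, 1, 1, 0],
  ![0, 1, 0, 1, 1, 1, 1, 1],
  ![0, 1, 1, 1, 0, 0, 0, 0],
  ![0, 1, 1, 1, 1, 0, 0, 0],
  ![0, 1, 1, 1, 1, 1, 0, 0],
  ![0, 1, 1, 1, 1, 1, 1, 0],
  ![0, 1, 1, 1, 1, 1, 1, 1],
  ![0, 1, 1, 2, 1, 0, 0, 0],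
  ![0, 1, 1, 2, 1, 1, 0, 0],
  ![0, 1, 1, 2, 1, 1, 1, 0],
  ![0, 1, 1, 2, 1, 1, 1, 1],
  ![0, 1, 1, 2, 2, 1, 0, 0],
  ![0, 1, 1, 2, 2, 1, 1, 0],
  ![0, 1, 1, 2, 2, 1, 1, 1],
  ![0, 1, 1, 2, 2, 2, 1, 0],
  ![0, 1, 1, 2, 2, 2, 1, 1],
  ![0, 1, 1, 2, 2, 2, 2, 1],
  ![1, 0, 0, 0, 0, 0, 0, 0],
  ![1, 0, 1, 0, 0, 0, 0, 0],
  ![1, 0, 1, 1, 0, 0, 0, 0],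
  ![1, 0, 1, 1, 1, 0, 0, 0],
  ![1, 0, 1, 1, 1, 1, 0, 0],
  ![1, 0, 1, 1, 1, 1, 1, 0],
  ![1, 0, 1, 1, 1, 1, 1, 1],
  ![1, 1, 1, 1, 0, 0, 0, 0],
  ![1, 1, 1, 1, 1, 0, 0, 0],
  ![1, 1, 1, 1, 1, 1, 0, 0],
  ![1, 1, 1, 1, 1, 1, 1, 0],
  ![1, 1, 1, 1, 1, 1, 1, 1],
  ![1, 1, 1, 2, 1, 0, 0, 0],
  ![1, 1, 1, 2, 1, 1, 0, 0],
  ![1, 1, 1, 2, 1, 1, 1, 0],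
  ![1, 1, 1, 2, 1, 1, 1, 1],
  ![1, 1, 1, 2, 2, 1, 0, 0],
  ![1, 1, 1, 2, 2, 1, 1, 0],
  ![1, 1, 1, 2, 2, 1, 1, 1],
  ![1, 1, 1, 2, 2, 2, 1, 0],
  ![1, 1, 1, 2, 2, 2, 1, 1],
  ![1, 1, 1, 2, 2, 2, 2, 1],
  ![1, 1, 2, 2, 1, 0, 0, 0],
  ![1, 1, 2, 2, 1, 1, 0, 0],
  ![1, 1, 2, 2, 1, 1, 1, 0],
  ![1, 1, 2, 2, 1, 1, 1, 1],
  ![1, 1, 2, 2, 2, 1, 0, 0],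
  ![1, 1, 2, 2, 2, 1, 1, 0],
  ![1, 1, 2, 2, 2, 1, 1, 1],
  ![1, 1, 2, 2, 2, 2, 1, 0],
  ![1, 1, 2, 2, 2, 2, 1, 1],
  ![1, 1, 2, 2, 2, 2, 2, 1],
  ![1, 1, 2, 3, 2, 1, 0, 0],
  ![1, 1, 2, 3, 2, 1, 1, 0],
  ![1, 1, 2, 3, 2, 1, 1, 1],
  ![1, 1, 2, 3, 2, 2, 1, 0],
  ![1, 1, 2, 3, 2, 2, 1, 1],
  ![1, 1, 2, 3, 2, 2, 2, 1],
  ![1, 1, 2, 3, 3, 2, 1, 0],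
  ![1, 1, 2, 3, 3, 2, 1, 1],
  ![1, 1, 2, 3, 3, 2, 2, 1],
  ![1, 1, 2, 3, 3, 3, 2, 1],
  ![1, 2, 2, 3, 2, 1, 0, 0],
  ![1, 2, 2, 3, 2, 1, 1, 0],
  ![1, 2, 2, 3, 2, 1, 1, 1],
  ![1, 2, 2, 3, 2, 2, 1, 0],
  ![1, 2, 2, 3, 2, 2, 1, 1],
  ![1, 2, 2, 3, 2, 2, 2, 1],
  ![1, 2, 2, 3, 3, 2, 1, 0],
  ![1, 2, 2, 3, 3, 2, 1, 1],
  ![1, 2, 2, 3, 3, 2, 2, 1],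
  ![1, 2, 2, 3, 3, 3, 2, 1],
  ![1, 2, 2, 4, 3, 2, 1, 0],
  ![1, 2, 2, 4, 3, 2, 1, 1],
  ![1, 2, 2, 4, 3, 2, 2, 1],
  ![1, 2, 2, 4, 3, 3, 2, 1],
  ![1, 2, 2, 4, 4, 3, 2, 1],
  ![1, 2, 3, 4, 3, 2, 1, 0],
  ![1, 2, 3, 4, 3, 2, 1, 1],
  ![1, 2, 3, 4, 3, 2, 2, 1],
  ![1, 2, 3, 4, 3, 3, 2, 1],
  ![1, 2, 3, 4, 4, 3, 2, 1],
  ![1, 2, 3, 5, 4, 3, 2, 1],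
  ![1, 3, 3, 5, 4, 3, 2, 1],
  ![2, 2, 3, 4, 3, 2, 1, 0],
  ![2, 2, 3, 4, 3, 2, 1, 1],
  ![2, 2, 3, 4, 3, 2, 2, 1],
  ![2, 2, 3, 4, 3, 3, 2, 1],
  ![2, 2, 3, 4, 4, 3, 2, 1],
  ![2, 2, 3, 5, 4, 3, 2, 1],
  ![2, 2, 4, 5, 4, 3, 2, 1],
  ![2, 3, 3, 5, 4, 3, 2, 1],
  ![2, 3, 4, 5, 4, 3, 2, 1],
  ![2, 3, 4, 6, 4, 3, 2, 1],
  ![2, 3, 4, 6, 5, 3, 2, 1],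
  ![2, 3, 4, 6, 5, 4, 2, 1],
  ![2, 3, 4, 6, 5, 4, 3, 1],
  ![2, 3, 4, 6, 5, 4, 3, 2]]



theorem mem_E8R_iff (α : Fin 8 → ℤ) : α ∈ E8R ↔ α ⬝ᵥ E8C *ᵥ α = 2 := by
  rw [E8R, Set.mem_ofPred_eq, B_eq_dotProduct_mulVec]

theorem mem_E8Rpos_iff (α : Fin 8 → ℤ) : α ∈ E8Rpos ↔ α ⬝ᵥ E8C *ᵥ α = 2 ∧ 0 ≤ α := by
  rw [E8Rpos, Set.mem_ofPred_eq, mem_E8R_iff, Pi.le_def]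
  rfl

theorem e8PositiveRootList_spec :
    ∀ v ∈ e8PositiveRootList, v ⬝ᵥ E8C *ᵥ v = 2 ∧ ∀ i, 0 ≤ v i := by
  decide +kernel

theorem single_mem_e8PositiveRootList : ∀ i, Pi.single i 1 ∈ e8PositiveRootList := by
  decide +kernel

theorem simpleReflection_mem_e8PositiveRootList : ∀ v ∈ e8PositiveRootList, ∀ i,
    (∀ j, 0 ≤ simpleReflection E8C i v j) → simpleReflection E8C i v ∈ e8PositiveRootList := by
  decide +kernel

theorem e8PositiveRootList_nodup : e8PositiveRootList.Nodup := by
  decide +kernel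

theorem E8Rpos_eq : E8Rpos = {v | v ∈ e8PositiveRootList} := by
  ext v
  rw [mem_E8Rpos_iff, Set.mem_ofPred_eq]
  refine ⟨fun ⟨hroot, hpos⟩ => ?_, fun hv => ⟨(e8PositiveRootList_spec v hv).1,
    Pi.le_def.mpr (e8PositiveRootList_spec v hv).2⟩⟩
  exact mem_of_simpleReflection_closed (S := {v | v ∈ e8PositiveRootList}) E8C_isSymm E8C_diag
    E8C_offDiag_nonpos (fun x => two_le_E8C_quadForm) single_mem_e8PositiveRootList
    simpleReflection_mem_e8PositiveRootList hpos hroot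

/-- There are 120 positive roots and R = R⁺ ⊔ (−R⁺). -/
theorem e8_positive_roots :
    E8Rpos.ncard = 120 ∧
    (∀ α, α ∈ E8R ↔ (α ∈ E8Rpos ∨ -α ∈ E8Rpos)) ∧
    (∀ α, ¬(α ∈ E8Rpos ∧ -α ∈ E8Rpos)) := by
  have hneg : ∀ α : Fin 8 → ℤ, -α ⬝ᵥ E8C *ᵥ -α = α ⬝ᵥ E8C *ᵥ α := fun α => by
    rw [mulVec_neg, neg_dotProduct, dotProduct_neg, neg_neg]
  refine ⟨?_, fun α => ?_, fun α ⟨hα, hnα⟩ => ?_⟩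
  · rw [E8Rpos_eq, ← List.coe_toFinset, Set.ncard_coe_finset,
      List.toFinset_card_of_nodup e8PositiveRootList_nodup]
    rfl
  · simp only [mem_E8R_iff, mem_E8Rpos_iff, hneg, neg_nonneg]
    constructor
    · intro hroot
      exact (nonneg_or_nonpos_of_root E8C_offDiag_nonpos (fun x => two_le_E8C_quadForm) hroot).imp
        (⟨hroot, ·⟩) (⟨hroot, ·⟩)
    · rintro (⟨hroot, -⟩ | ⟨hroot, -⟩) <;> exact hroot
  · rw [mem_E8Rpos_iff] at hα hnα
    have hzero : α = 0 := le_antisymm (neg_nonneg.mp hnα.2) hα.2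
    simp [hzero] at hα
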